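/- (Corollary 2.4) Let c ∈ ℂ, let κ ∈ ℂ with Re(κ) ≥ 0 and κ ≠ 0, and let M > 0. If f ∈ 𝒜 satisfies |B_κ^c f(z)| < M for all z ∈ 𝕌, then |B_{κ+1}^c f(z)| < M for all z ∈ 𝕌. -/

import Mathlib

/-!
The coefficients of `g = B_{κ+1}^c f` decay like `1/n!`, so `g` is entire, and the identity
`κ (κ+1)_n = (κ)_n (κ+n)` turns into the recurrence
`κ B_κ^c f = z g' + (κ - 1) g`. Given `z₀ ∈ 𝕌`, let `z₁` maximise `|g|` on `|z| ≤ |z₀|`.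
By Jack's lemma `z₁ g'(z₁) = k g(z₁)` with `k ≥ 1`, hence `κ B_κ^c f(z₁) = (κ + k - 1) g(z₁)`,
and `|κ + k - 1| ≥ |κ|` since `Re κ ≥ 0`. So `|g(z₀)| ≤ |g(z₁)| ≤ |B_κ^c f(z₁)| < M`.
-/

open Complex Metric Set

noncomputable section

/-- The open unit disk 𝕌. -/
def unitDisk : Set ℂ := Metric.ball (0 : ℂ) 1

/-- The class 𝒜 of normalized analytic functions on 𝕌. -/
def InA (f : ℂ → ℂ) : Prop :=
  DifferentiableOn ℂ f unitDisk ∧ f 0 = 0 ∧ deriv f 0 = 1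

/-- ℋ_0 : analytic on 𝕌 with value 0 at the origin. -/
def InH0 (q : ℂ → ℂ) : Prop := DifferentiableOn ℂ q unitDisk ∧ q 0 = 0

/-- ℋ_1 : analytic on 𝕌 with value 1 at the origin. -/
def InH1 (q : ℂ → ℂ) : Prop := DifferentiableOn ℂ q unitDisk ∧ q 0 = 1

/-- Univalent (analytic and injective) on 𝕌. -/
def Univalent (h : ℂ → ℂ) : Prop :=
  DifferentiableOn ℂ h unitDisk ∧ Set.InjOn h unitDisk

/-- The coefficient (−c)^n / (4^n (κ)_n n!). -/
def besselCoeff (c κ : ℂ) (n : ℕ) : ℂ :=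
  (-c) ^ n / ((4 : ℂ) ^ n * (ascPochhammer ℂ n).eval κ * (n.factorial : ℂ))

/-- The n-th Taylor coefficient of f at 0. -/
def taylorCoeff (f : ℂ → ℂ) (n : ℕ) : ℂ := iteratedDeriv n f 0 / (n.factorial : ℂ)

/-- φ_{κ,c} : the normalized generalized Bessel function of the first kind. -/
def genBessel (κ c : ℂ) (z : ℂ) : ℂ := ∑' n : ℕ, besselCoeff c κ n * z ^ (n + 1)

/-- The operator B_κ^c, the Hadamard product of φ_{κ,c} with f. -/
def besselOp (c κ : ℂ) (f : ℂ → ℂ) (z : ℂ) : ℂ :=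
  ∑' n : ℕ, besselCoeff c κ n * taylorCoeff f (n + 1) * z ^ (n + 1)

/-- Subordination f ≺ F on the unit disk. -/
def Subordinate (f F : ℂ → ℂ) : Prop :=
  ∃ w : ℂ → ℂ, DifferentiableOn ℂ w unitDisk ∧ w 0 = 0 ∧
    Set.MapsTo w unitDisk unitDisk ∧ ∀ z ∈ unitDisk, f z = F (w z)

/-- E(q) : boundary points where q blows up. -/
def Eset (q : ℂ → ℂ) : Set ℂ :=
  {ζ | ζ ∈ Metric.sphere (0 : ℂ) 1 ∧
    Filter.Tendsto q (nhdsWithin ζ unitDisk) (Bornology.cobounded ℂ)}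

/-- The class 𝒬. -/
def InQ (q : ℂ → ℂ) : Prop :=
  AnalyticOnNhd ℂ q (Metric.closedBall (0 : ℂ) 1 \ Eset q) ∧
  Set.InjOn q (Metric.closedBall (0 : ℂ) 1 \ Eset q) ∧
  ∀ ζ ∈ Metric.sphere (0 : ℂ) 1 \ Eset q, deriv q ζ ≠ 0

def InQ0 (q : ℂ → ℂ) : Prop := InQ q ∧ q 0 = 0

def InQ1 (q : ℂ → ℂ) : Prop := InQ q ∧ q 0 = 1

/-- The admissibility class Φ_H[Ω,q] (Definition 2.1), with parameter κ. -/
def PhiH (κ : ℂ) (Ω : Set ℂ) (q : ℂ → ℂ) (φ : ℂ → ℂ → ℂ → ℂ → ℂ) : Prop :=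
  ∀ z ∈ unitDisk, ∀ ζ ∈ Metric.sphere (0 : ℂ) 1 \ Eset q, ∀ k : ℝ, 1 ≤ k →
    ∀ u v w : ℂ, u = q ζ →
      v = ((k : ℂ) * ζ * deriv q ζ + (κ - 1) * q ζ) / κ →
      ((κ * (κ - 1) * w - (κ - 2) * (κ - 1) * u) / (κ * v - (κ - 1) * u) -
          (2 * κ - 3)).re ≥ k * (ζ * deriv (deriv q) ζ / deriv q ζ + 1).re →
      φ u v w z ∉ Ω

/-- The admissibility class Φ_{H,1}[Ω,q] (Definition 2.3), with parameter κ. -/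
def PhiH1 (κ : ℂ) (Ω : Set ℂ) (q : ℂ → ℂ) (φ : ℂ → ℂ → ℂ → ℂ → ℂ) : Prop :=
  ∀ z ∈ unitDisk, ∀ ζ ∈ Metric.sphere (0 : ℂ) 1 \ Eset q, q ζ ≠ 0 → ∀ k : ℝ, 1 ≤ k →
    ∀ u v w : ℂ, u = q ζ →
      v = (1 / (κ - 1)) * ((k : ℂ) * ζ * deriv q ζ / q ζ + κ * q ζ - 1) →
      ((κ - 1) * v * ((κ - 1) * (w - v) + 1 - w) / ((κ - 1) * v + 1 - κ * u) -
          (2 * κ * u - 1 - (κ - 1) * v)).re ≥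
        k * (ζ * deriv (deriv q) ζ / deriv q ζ + 1).re →
      φ u v w z ∉ Ω

/-- The admissibility class Φ_{H,2}[Ω,q] (Definition 2.5), with parameter κ. -/
def PhiH2 (κ : ℂ) (Ω : Set ℂ) (q : ℂ → ℂ) (φ : ℂ → ℂ → ℂ → ℂ → ℂ) : Prop :=
  ∀ z ∈ unitDisk, ∀ ζ ∈ Metric.sphere (0 : ℂ) 1 \ Eset q, ∀ k : ℝ, 1 ≤ k →
    ∀ u v w : ℂ, u = q ζ →
      v = ((k : ℂ) * ζ * deriv q ζ + κ * q ζ) / κ →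
      ((κ - 1) * (w - u) / (v - u) + (1 - 2 * κ)).re ≥
        k * (ζ * deriv (deriv q) ζ / deriv q ζ + 1).re →
      φ u v w z ∉ Ω

/-- The admissibility class Φ_H[Ω,M] (Definition 2.2), with parameter κ. -/
def PhiHM (κ : ℂ) (Ω : Set ℂ) (M : ℝ) (φ : ℂ → ℂ → ℂ → ℂ → ℂ) : Prop :=
  ∀ z ∈ unitDisk, ∀ θ : ℝ, ∀ k : ℝ, 1 ≤ k → ∀ L : ℂ,
    (L * Complex.exp (-(θ : ℂ) * Complex.I)).re ≥ (k - 1) * k * M →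
    φ ((M : ℂ) * Complex.exp ((θ : ℂ) * Complex.I))
      (((k : ℂ) + κ - 1) / κ * (M : ℂ) * Complex.exp ((θ : ℂ) * Complex.I))
      ((L + (κ - 1) * (2 * (k : ℂ) + κ - 2) * (M : ℂ) * Complex.exp ((θ : ℂ) * Complex.I)) /
        (κ * (κ - 1))) z ∉ Ω

/-- The admissibility class Φ′_H[Ω,q] (Definition 3.1), with parameter κ. -/
def PhiH' (κ : ℂ) (Ω : Set ℂ) (q : ℂ → ℂ) (φ : ℂ → ℂ → ℂ → ℂ → ℂ) : Prop :=
  ∀ z ∈ unitDisk, ∀ ς ∈ Metric.sphere (0 : ℂ) 1, ∀ m : ℝ, 1 ≤ m →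
    ∀ u v w : ℂ, u = q z →
      v = (z * deriv q z + (m : ℂ) * (κ - 1) * q z) / ((m : ℂ) * κ) →
      ((κ * (κ - 1) * w - (κ - 2) * (κ - 1) * u) / (κ * v - (κ - 1) * u) -
          (2 * κ - 3)).re ≤ (1 / m) * (z * deriv (deriv q) z / deriv q z + 1).re →
      φ u v w ς ∈ Ω

/-- The quotient g/h extended analytically with value 1 at the origin. -/
def ratio (g h : ℂ → ℂ) (z : ℂ) : ℂ := if z = 0 then 1 else g z / h z

/-- The quotient g(z)/z extended analytically with value 1 at the origin. -/
def divZ (g : ℂ → ℂ) (z : ℂ) : ℂ := if z = 0 then 1 else g z / z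

/-- z ↦ φ(B_{κ+1}^c f(z), B_κ^c f(z), B_{κ−1}^c f(z); z). -/
def opPhi (c κ : ℂ) (φ : ℂ → ℂ → ℂ → ℂ → ℂ) (f : ℂ → ℂ) (z : ℂ) : ℂ :=
  φ (besselOp c (κ + 1) f z) (besselOp c κ f z) (besselOp c (κ - 1) f z) z

open scoped Nat

theorem add_natCast_ne_zero_of_re_nonneg {κ : ℂ} (hre : 0 ≤ κ.re) (h0 : κ ≠ 0) (n : ℕ) :
    κ + n ≠ 0 := by
  rcases n.eq_zero_or_pos with rfl | hn
  · simpa using h0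
  · intro h
    have := congrArg re h
    simp only [add_re, natCast_re, zero_re] at this
    have : (0 : ℝ) < n := Nat.cast_pos.mpr hn
    linarith

theorem ascPochhammer_eval_ne_zero {κ : ℂ} (hκ : ∀ n : ℕ, κ + n ≠ 0) (n : ℕ) :
    (ascPochhammer ℂ n).eval κ ≠ 0 := by
  rw [Ne, ascPochhammer_eval_eq_zero_iff]
  rintro ⟨k, -, hk⟩
  exact hκ k (by rw [hk]; ring)

theorem one_le_norm_ascPochhammer_eval {μ : ℂ} (hμ : 1 ≤ μ.re) (n : ℕ) :
    1 ≤ ‖(ascPochhammer ℂ n).eval μ‖ := by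
  induction n with
  | zero => simp
  | succ n ih =>
    rw [ascPochhammer_succ_eval, norm_mul]
    refine one_le_mul_of_one_le_of_one_le ih ?_
    calc (1 : ℝ) ≤ (μ + n).re := by
          simp only [add_re, natCast_re]; linarith [n.cast_nonneg (α := ℝ)]
      _ ≤ ‖μ + n‖ := re_le_norm _

theorem mul_besselCoeff_eq {c κ : ℂ} (hκ : ∀ n : ℕ, κ + n ≠ 0) (n : ℕ) :
    κ * besselCoeff c κ n = (κ + n) * besselCoeff c (κ + 1) n := by
  have hshift : (ascPochhammer ℂ n).eval κ * (κ + n) = κ * (ascPochhammer ℂ n).eval (κ + 1) := by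
    have := congrArg (Polynomial.eval κ) ((ascPochhammer_succ_left ℂ n).symm.trans
      (ascPochhammer_succ_right ℂ n))
    simpa [Polynomial.eval_comp] using this.symm
  have hP := ascPochhammer_eval_ne_zero hκ n
  have hP₁ := ascPochhammer_eval_ne_zero (κ := κ + 1) (fun m => by
    simpa [add_assoc, add_comm (1 : ℂ)] using hκ (m + 1)) n
  have hfac : (n ! : ℂ) ≠ 0 := by exact_mod_cast n.factorial_ne_zero
  unfold besselCoeff
  field_simp
  linear_combination -(-c) ^ n * hshift

theorem norm_besselCoeff_le {c μ : ℂ} (hμ : 1 ≤ μ.re) (n : ℕ) :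
    ‖besselCoeff c μ n‖ ≤ ‖c‖ ^ n / n ! := by
  have hP := one_le_norm_ascPochhammer_eval hμ n
  rw [besselCoeff, norm_div, norm_pow, norm_neg, norm_mul, norm_mul, norm_pow, norm_natCast]
  gcongr
  calc (n ! : ℝ) = 1 * 1 * n ! := by ring
    _ ≤ ‖(4 : ℂ)‖ ^ n * ‖(ascPochhammer ℂ n).eval μ‖ * n ! := by
      gcongr
      · exact one_le_pow₀ (by norm_num)

theorem exists_norm_taylorCoeff_mul_pow_le {f : ℂ → ℂ} {R ρ : ℝ}
    (hf : DifferentiableOn ℂ f (ball 0 R)) (hρ : 0 ≤ ρ) (hρR : ρ < R) :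
    ∃ C, ∀ n, ‖taylorCoeff f n‖ * ρ ^ n ≤ C := by
  have hsum := (Complex.hasSum_taylorSeries_on_ball (z := ρ) hf
    (mem_ball_zero_iff.mpr (by rwa [norm_real, Real.norm_of_nonneg hρ]))).summable
  obtain ⟨C, hC⟩ := hsum.tendsto_atTop_zero.norm.bddAbove_range
  refine ⟨C, fun n => le_trans (le_of_eq ?_) (hC ⟨n, rfl⟩)⟩
  simp only [taylorCoeff, smul_eq_mul, sub_zero, norm_mul, norm_inv, norm_pow, norm_div,
    Complex.norm_natCast, norm_real, Real.norm_of_nonneg hρ]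
  ring

section EntireSeries

variable {a : ℕ → ℂ}

theorem summable_mul_pow_succ
    (ha : ∀ R : ℝ, 0 ≤ R → Summable fun n : ℕ => ((n : ℝ) + 1) * ‖a n‖ * R ^ n) (z : ℂ) :
    Summable fun n => a n * z ^ (n + 1) := by
  refine .of_norm_bounded ((ha ‖z‖ (norm_nonneg z)).mul_right ‖z‖) fun n => ?_
  rw [norm_mul, norm_pow, pow_succ, ← mul_assoc]
  gcongr
  exact le_mul_of_one_le_left (norm_nonneg _) (by linarith [n.cast_nonneg (α := ℝ)])

theorem summable_succ_mul_mul_pow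
    (ha : ∀ R : ℝ, 0 ≤ R → Summable fun n : ℕ => ((n : ℝ) + 1) * ‖a n‖ * R ^ n)
    (z : ℂ) : Summable fun n : ℕ => ((n : ℂ) + 1) * a n * z ^ n := by
  refine .of_norm_bounded (ha ‖z‖ (norm_nonneg z)) fun n => ?_
  rw [norm_mul, norm_mul, norm_pow, ← Nat.cast_succ, Complex.norm_natCast, Nat.cast_succ]

theorem hasDerivAt_tsum_mul_pow_succ
    (ha : ∀ R : ℝ, 0 ≤ R → Summable fun n : ℕ => ((n : ℝ) + 1) * ‖a n‖ * R ^ n) (z : ℂ) :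
    HasDerivAt (fun w => ∑' n, a n * w ^ (n + 1)) (∑' n : ℕ, ((n : ℂ) + 1) * a n * z ^ n) z := by
  have hR : 0 < ‖z‖ + 1 := by positivity
  refine hasDerivAt_tsum_of_isPreconnected (g := fun n w => a n * w ^ (n + 1))
    (g' := fun n w => ((n : ℂ) + 1) * a n * w ^ n) (ha _ hR.le) isOpen_ball
    (convex_ball 0 _).isPreconnected (fun n w _ => ?_) (fun n w hw => ?_) (mem_ball_self hR)
    (summable_mul_pow_succ ha 0) (mem_ball_zero_iff.mpr (lt_add_one _))
  · exact ((hasDerivAt_pow (n + 1) w).const_mul (a n)).congr_deriv (by simp; ring)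
  · rw [mem_ball_zero_iff] at hw
    rw [norm_mul, norm_mul, norm_pow, ← Nat.cast_succ, Complex.norm_natCast, Nat.cast_succ]
    gcongr

end EntireSeries

theorem summable_norm_besselCoeff_mul_taylorCoeff {c μ : ℂ} {f : ℂ → ℂ} (hμ : 1 ≤ μ.re)
    (hf : DifferentiableOn ℂ f unitDisk) (R : ℝ) (hR : 0 ≤ R) :
    Summable fun n : ℕ => ((n : ℝ) + 1) * ‖besselCoeff c μ n * taylorCoeff f (n + 1)‖ * R ^ n := by
  obtain ⟨C, hC⟩ := exists_norm_taylorCoeff_mul_pow_le hf (by norm_num : (0 : ℝ) ≤ 2⁻¹)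
    (by norm_num)
  have hC' (n : ℕ) : ‖taylorCoeff f n‖ ≤ C * 2 ^ n := by
    simpa [inv_pow, mul_inv_le_iff₀] using hC n
  refine .of_nonneg_of_le (fun n => by positivity) (fun n => ?_)
    ((Real.summable_pow_div_factorial (4 * ‖c‖ * R)).mul_left (2 * C))
  calc ((n : ℝ) + 1) * ‖besselCoeff c μ n * taylorCoeff f (n + 1)‖ * R ^ n
      ≤ 2 ^ n * (‖c‖ ^ n / n ! * (C * 2 ^ (n + 1))) * R ^ n := by
        rw [norm_mul]
        gcongr
        · norm_cast; exact Nat.lt_two_pow_self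
        · exact norm_besselCoeff_le hμ n
        · exact hC' (n + 1)
    _ = 2 * C * ((4 * ‖c‖ * R) ^ n / n !) := by
        rw [show (4 : ℝ) = 2 * 2 by norm_num, mul_pow, mul_pow, mul_pow]; ring

theorem hasDerivAt_besselOp {c μ : ℂ} {f : ℂ → ℂ} (hμ : 1 ≤ μ.re)
    (hf : DifferentiableOn ℂ f unitDisk) (z : ℂ) :
    HasDerivAt (besselOp c μ f)
      (∑' n : ℕ, ((n : ℂ) + 1) * (besselCoeff c μ n * taylorCoeff f (n + 1)) * z ^ n) z :=
  hasDerivAt_tsum_mul_pow_succ (summable_norm_besselCoeff_mul_taylorCoeff hμ hf) z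

theorem besselOp_zero (c μ : ℂ) (f : ℂ → ℂ) : besselOp c μ f 0 = 0 := by
  simp [besselOp]

theorem besselOp_recurrence {c κ : ℂ} {f : ℂ → ℂ} (hκre : 0 ≤ κ.re) (hκ0 : κ ≠ 0)
    (hf : DifferentiableOn ℂ f unitDisk) (z : ℂ) :
    κ * besselOp c κ f z =
      z * deriv (besselOp c (κ + 1) f) z + (κ - 1) * besselOp c (κ + 1) f z := by
  have hμ : 1 ≤ (κ + 1).re := by simp [hκre]
  have ha := summable_norm_besselCoeff_mul_taylorCoeff (c := c) hμ hf
  rw [(hasDerivAt_besselOp hμ hf z).deriv, besselOp, besselOp, ← tsum_mul_left, ← tsum_mul_left,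
    ← tsum_mul_left, ← Summable.tsum_add ((summable_succ_mul_mul_pow ha z).mul_left z)
      ((summable_mul_pow_succ ha z).mul_left (κ - 1))]
  refine tsum_congr fun n => ?_
  linear_combination taylorCoeff f (n + 1) * z ^ (n + 1) *
    mul_besselCoeff_eq (add_natCast_ne_zero_of_re_nonneg hκre hκ0) n

open ComplexConjugate

theorem im_conj_mul_mul_eq_zero_of_norm_le {g : ℂ → ℂ} {z₀ d : ℂ} (hd : HasDerivAt g d z₀)
    (hmax : ∀ θ : ℝ, ‖g (z₀ * exp (θ * I))‖ ≤ ‖g z₀‖) : (conj (g z₀) * (z₀ * d)).im = 0 := by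
  have hcurve : HasDerivAt (fun w : ℂ => z₀ * exp (w * I)) (z₀ * (exp (0 * I) * (1 * I)))
      ((0 : ℝ) : ℂ) := by
    simpa using (((hasDerivAt_id (0 : ℂ)).mul_const I).cexp).const_mul z₀
  have hu := ((hd.comp_of_eq _ hcurve (by simp)).const_mul (conj (g z₀))).real_of_complex
  have hmax' : IsLocalMax (fun θ : ℝ => (conj (g z₀) * g (z₀ * exp (θ * I))).re) 0 :=
    Filter.Eventually.of_forall fun θ => by
      calc (conj (g z₀) * g (z₀ * exp (θ * I))).re ≤ ‖g z₀‖ * ‖g (z₀ * exp (θ * I))‖ :=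
            (re_le_norm _).trans_eq (by simp)
        _ ≤ ‖g z₀‖ * ‖g z₀‖ := by gcongr; exact hmax θ
        _ = (conj (g z₀) * g (z₀ * exp ((0 : ℝ) * I))).re := by
            rw [ofReal_zero, zero_mul, exp_zero, mul_one, conj_mul']; norm_cast; ring
  have h := hmax'.hasDerivAt_eq_zero hu
  rwa [show conj (g z₀) * (d * (z₀ * (exp (0 * I) * (1 * I)))) = conj (g z₀) * (z₀ * d) * I by
    simp only [zero_mul, exp_zero, one_mul]; ring, mul_I_re, neg_eq_zero] at h

theorem sq_norm_le_re_conj_mul_mul_of_norm_le {g : ℂ → ℂ} {z₀ d : ℂ} (hd : HasDerivAt g d z₀)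
    (hrad : ∀ t ∈ Icc (0 : ℝ) 1, ‖g (t * z₀)‖ ≤ t * ‖g z₀‖) :
    ‖g z₀‖ ^ 2 ≤ (conj (g z₀) * (z₀ * d)).re := by
  have hray : HasDerivAt (fun w : ℂ => w * z₀) (1 * z₀) ((1 : ℝ) : ℂ) :=
    (hasDerivAt_id _).mul_const z₀
  have hψ := (((hd.comp_of_eq _ hray (by simp)).const_mul (conj (g z₀))).real_of_complex).sub
    ((hasDerivAt_id' (1 : ℝ)).const_mul (‖g z₀‖ ^ 2))
  have hmax : IsLocalMaxOn
      (fun t : ℝ => (conj (g z₀) * g (t * z₀)).re - ‖g z₀‖ ^ 2 * t) (Icc 0 1) 1 := by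
    refine Filter.eventually_of_mem self_mem_nhdsWithin fun t ht => ?_
    calc (conj (g z₀) * g (t * z₀)).re - ‖g z₀‖ ^ 2 * t
        ≤ ‖g z₀‖ * ‖g (t * z₀)‖ - ‖g z₀‖ ^ 2 * t := by
          gcongr; exact (re_le_norm _).trans_eq (by simp)
      _ ≤ ‖g z₀‖ * (t * ‖g z₀‖) - ‖g z₀‖ ^ 2 * t := by gcongr; exact hrad t ht
      _ = (conj (g z₀) * g ((1 : ℝ) * z₀)).re - ‖g z₀‖ ^ 2 * 1 := by
          rw [ofReal_one, one_mul, conj_mul']; norm_cast; ring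
  have hcone : (-1 : ℝ) ∈ posTangentConeAt (Icc (0 : ℝ) 1) 1 := by
    simpa using sub_mem_posTangentConeAt_of_segment_subset
      ((convex_Icc (0 : ℝ) 1).segment_subset (right_mem_Icc.2 zero_le_one)
        (left_mem_Icc.2 zero_le_one))
  have h := hmax.hasFDerivWithinAt_nonpos hψ.hasDerivWithinAt.hasFDerivWithinAt hcone
  rw [ContinuousLinearMap.toSpanSingleton_apply, smul_eq_mul, one_mul, mul_comm d] at h
  linarith

/-- Jack's lemma. The number `conj (g z₀) * (z₀ * g' z₀)` is real because `‖g‖` is maximal at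
`z₀` along the circle, and at least `‖g z₀‖ ^ 2` by the Schwarz lemma along the radius. -/
theorem exists_one_le_mul_deriv_eq_of_isMaxOn {g : ℂ → ℂ} {z₀ : ℂ}
    (hg : ∀ z ∈ closedBall (0 : ℂ) ‖z₀‖, DifferentiableAt ℂ g z) (hg0 : g 0 = 0)
    (hgz₀ : g z₀ ≠ 0) (hmax : IsMaxOn (‖g ·‖) (closedBall 0 ‖z₀‖) z₀) :
    ∃ k : ℝ, 1 ≤ k ∧ z₀ * deriv g z₀ = k * g z₀ := by
  have hz₀ : 0 < ‖z₀‖ := norm_pos_iff.2 fun h => hgz₀ (h ▸ hg0)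
  have hm : 0 < ‖g z₀‖ := norm_pos_iff.2 hgz₀
  have hd := (hg z₀ (mem_closedBall_zero_iff.2 le_rfl)).hasDerivAt
  have hschwarz : ∀ w ∈ ball (0 : ℂ) ‖z₀‖, ‖g w‖ ≤ ‖g z₀‖ / ‖z₀‖ * ‖w‖ := fun w hw => by
    simpa [hg0] using Complex.dist_le_div_mul_dist_of_mapsTo_ball
      (fun z hz => (hg z (ball_subset_closedBall hz)).differentiableWithinAt)
      (fun z hz => by simpa [hg0] using hmax (ball_subset_closedBall hz)) hw
  have hrad (t : ℝ) (ht : t ∈ Icc (0 : ℝ) 1) : ‖g (t * z₀)‖ ≤ t * ‖g z₀‖ := by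
    rcases ht.2.lt_or_eq with ht1 | rfl
    · have hnorm : ‖(t : ℂ) * z₀‖ = t * ‖z₀‖ := by
        rw [norm_mul, norm_real, Real.norm_of_nonneg ht.1]
      calc ‖g (t * z₀)‖ ≤ ‖g z₀‖ / ‖z₀‖ * (t * ‖z₀‖) :=
            hnorm ▸ hschwarz _ (mem_ball_zero_iff.2 (by rw [hnorm]; nlinarith))
        _ = t * ‖g z₀‖ := by field_simp
    · simp
  have hcirc (θ : ℝ) : ‖g (z₀ * exp (θ * I))‖ ≤ ‖g z₀‖ :=
    hmax (mem_closedBall_zero_iff.2 (by rw [norm_mul, norm_exp_ofReal_mul_I, mul_one]))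
  have hreal : conj (g z₀) * (z₀ * deriv g z₀) = (conj (g z₀) * (z₀ * deriv g z₀)).re :=
    ext rfl (by simpa using im_conj_mul_mul_eq_zero_of_norm_le hd hcirc)
  refine ⟨_, (one_le_div (by positivity)).2 (sq_norm_le_re_conj_mul_mul_of_norm_le hd hrad), ?_⟩
  apply mul_left_cancel₀ ((map_ne_zero (starRingEnd ℂ)).2 hgz₀)
  rwa [mul_left_comm _ _ (g z₀), conj_mul', ofReal_div, ofReal_pow,
    div_mul_cancel₀ _ (pow_ne_zero 2 (ofReal_ne_zero.2 hm.ne'))]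

theorem norm_le_norm_add_ofReal {κ : ℂ} (hκ : 0 ≤ κ.re) {t : ℝ} (ht : 0 ≤ t) :
    ‖κ‖ ≤ ‖κ + t‖ := by
  rw [← sq_le_sq₀ (norm_nonneg _) (norm_nonneg _), Complex.sq_norm, Complex.sq_norm,
    normSq_apply, normSq_apply]
  simp only [add_re, ofReal_re, add_im, ofReal_im, add_zero]
  nlinarith

/-- Corollary 2.4. -/
theorem corollary_2_4 (c κ : ℂ) (hκre : 0 ≤ κ.re) (hκ0 : κ ≠ 0)
    (M : ℝ) (hM : 0 < M) (f : ℂ → ℂ) (hf : InA f)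
    (h : ∀ z ∈ unitDisk, ‖besselOp c κ f z‖ < M) :
    ∀ z ∈ unitDisk, ‖besselOp c (κ + 1) f z‖ < M := by
  set g := besselOp c (κ + 1) f
  have hg : Differentiable ℂ g := fun z =>
    (hasDerivAt_besselOp (by simp [hκre]) hf.1 z).differentiableAt
  intro z₀ hz₀
  obtain ⟨z₁, hz₁, hmax⟩ := (isCompact_closedBall (0 : ℂ) ‖z₀‖).exists_isMaxOn
    ⟨z₀, mem_closedBall_zero_iff.2 le_rfl⟩ hg.continuous.norm.continuousOn
  have hz₁U : z₁ ∈ unitDisk := closedBall_subset_ball (mem_ball_zero_iff.1 hz₀) hz₁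
  refine (hmax (mem_closedBall_zero_iff.2 le_rfl)).trans_lt ?_
  by_cases hgz₁ : g z₁ = 0
  · simpa [hgz₁] using hM
  obtain ⟨k, hk, hjack⟩ := exists_one_le_mul_deriv_eq_of_isMaxOn (fun z _ => hg z)
    (besselOp_zero c _ f) hgz₁
    (hmax.on_subset (closedBall_subset_closedBall (mem_closedBall_zero_iff.1 hz₁)))
  have hrec : κ * besselOp c κ f z₁ = (κ + (k - 1 : ℝ)) * g z₁ := by
    rw [besselOp_recurrence hκre hκ0 hf.1 z₁, hjack]; push_cast; ring
  have hκ : 0 < ‖κ‖ := norm_pos_iff.2 hκ0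
  refine lt_of_le_of_lt (le_of_mul_le_mul_left ?_ hκ) (h z₁ hz₁U)
  calc ‖κ‖ * ‖g z₁‖ ≤ ‖κ + (k - 1 : ℝ)‖ * ‖g z₁‖ := by
        gcongr; exact norm_le_norm_add_ofReal hκre (by linarith)
    _ = ‖κ‖ * ‖besselOp c κ f z₁‖ := by rw [← norm_mul, ← norm_mul, hrec]

end
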